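/- arXiv:1006.2592 — 4 statements merged into one kernel-verified Lean document; each statement's English description precedes it below -/
import Mathlib

section
/- Let λ > 0, η ≥ 0, and t ∈ ℝ with |t| ≠ λ. The function f(θ) = (t−θ)²/2 + (λ²/(2(1+η)))·1_{θ≠0} + (η/2)θ² is uniquely minimized over θ ∈ ℝ at the hard-ridge threshold θ̂ = 0 if |t| < λ and θ̂ = t/(1+η) if |t| > λ. -/
/-!
Off zero the objective is the parabola `(1 + η)/2 · (θ - t/(1 + η))² + (η t² + λ²)/(2(1 + η))`,
while its value at zero is `t²/2`. The minimum off zero exceeds the value at zero by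
`(λ² - t²)/(2(1 + η))`, whose sign is that of `λ - |t|`.
-/

/-- Hard-ridge (hybrid) thresholding function. -/
noncomputable def hardRidgeThresh (t lam eta : ℝ) : ℝ :=
  if |t| < lam then 0 else t / (1 + eta)

noncomputable def hardRidgeObjective (lam eta t θ : ℝ) : ℝ :=
  (t - θ) ^ 2 / 2 + (if θ ≠ 0 then lam ^ 2 / (2 * (1 + eta)) else 0) + (eta / 2) * θ ^ 2

section

variable {lam eta t θ : ℝ}

lemma hardRidgeObjective_zero : hardRidgeObjective lam eta t 0 = t ^ 2 / 2 := by
  simp [hardRidgeObjective]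

lemma hardRidgeObjective_of_ne_zero (hη : 1 + eta ≠ 0) (hθ : θ ≠ 0) :
    hardRidgeObjective lam eta t θ
      = (1 + eta) / 2 * (θ - t / (1 + eta)) ^ 2 + (eta * t ^ 2 + lam ^ 2) / (2 * (1 + eta)) := by
  rw [hardRidgeObjective, if_pos hθ]
  field_simp
  ring

lemma hardRidge_vertexValue_sub_sq_div_two (hη : 1 + eta ≠ 0) :
    (eta * t ^ 2 + lam ^ 2) / (2 * (1 + eta)) - t ^ 2 / 2
      = (lam ^ 2 - t ^ 2) / (2 * (1 + eta)) := by
  field_simp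
  ring

lemma hardRidgeObjective_zero_lt (hη : 0 < 1 + eta) (ht : t ^ 2 < lam ^ 2) (hθ : θ ≠ 0) :
    hardRidgeObjective lam eta t 0 < hardRidgeObjective lam eta t θ := by
  have hgap : 0 < (lam ^ 2 - t ^ 2) / (2 * (1 + eta)) := by
    apply div_pos <;> linarith
  have hdiff := hardRidge_vertexValue_sub_sq_div_two (lam := lam) (t := t) hη.ne'
  rw [hardRidgeObjective_zero, hardRidgeObjective_of_ne_zero hη.ne' hθ]
  have : 0 ≤ (1 + eta) / 2 * (θ - t / (1 + eta)) ^ 2 := by positivity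
  linarith

lemma hardRidgeObjective_vertex_lt_zero (hη : 0 < 1 + eta) (ht : lam ^ 2 < t ^ 2) :
    hardRidgeObjective lam eta t (t / (1 + eta)) < hardRidgeObjective lam eta t 0 := by
  have ht0 : t ≠ 0 := by rintro rfl; nlinarith [sq_nonneg lam]
  have hgap : (lam ^ 2 - t ^ 2) / (2 * (1 + eta)) < 0 := by
    apply div_neg_of_neg_of_pos <;> linarith
  have hdiff := hardRidge_vertexValue_sub_sq_div_two (lam := lam) (t := t) hη.ne'
  rw [hardRidgeObjective_zero,
    hardRidgeObjective_of_ne_zero hη.ne' (div_ne_zero ht0 hη.ne'), sub_self]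
  linarith

lemma hardRidgeObjective_vertex_lt (hη : 0 < 1 + eta) (ht : t ≠ 0) (hθ : θ ≠ 0)
    (hθt : θ ≠ t / (1 + eta)) :
    hardRidgeObjective lam eta t (t / (1 + eta)) < hardRidgeObjective lam eta t θ := by
  rw [hardRidgeObjective_of_ne_zero hη.ne' (div_ne_zero ht hη.ne'),
    hardRidgeObjective_of_ne_zero hη.ne' hθ, sub_self]
  have hne : θ - t / (1 + eta) ≠ 0 := sub_ne_zero.2 hθt
  have : 0 < (1 + eta) / 2 * (θ - t / (1 + eta)) ^ 2 := by positivity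
  linarith

end

theorem hardRidge_unique_minimizer (lam eta t : ℝ)
    (hlam : 0 < lam) (heta : 0 ≤ eta) (ht : |t| ≠ lam) :
    ∀ θ : ℝ, θ ≠ hardRidgeThresh t lam eta →
      (t - hardRidgeThresh t lam eta) ^ 2 / 2
          + (if hardRidgeThresh t lam eta ≠ 0 then lam ^ 2 / (2 * (1 + eta)) else 0)
          + (eta / 2) * (hardRidgeThresh t lam eta) ^ 2
        < (t - θ) ^ 2 / 2 + (if θ ≠ 0 then lam ^ 2 / (2 * (1 + eta)) else 0)
          + (eta / 2) * θ ^ 2 := by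
  intro θ hθ
  have hη : 0 < 1 + eta := by linarith
  change hardRidgeObjective lam eta t _ < hardRidgeObjective lam eta t θ
  unfold hardRidgeThresh at *
  split_ifs at * with hsmall
  · exact hardRidgeObjective_zero_lt hη (by rwa [sq_lt_sq, abs_of_pos hlam]) hθ
  · have hlarge : lam < |t| := lt_of_le_of_ne (not_lt.1 hsmall) (Ne.symm ht)
    rcases eq_or_ne θ 0 with rfl | hθ0
    · exact hardRidgeObjective_vertex_lt_zero hη (by rwa [sq_lt_sq, abs_of_pos hlam])
    · have ht0 : t ≠ 0 := by rintro rfl; rw [abs_zero] at hlarge; linarith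
      exact hardRidgeObjective_vertex_lt hη ht0 hθ0 hθ
end

section
/- Let X ∈ ℝ^{n×p} have full column rank, H = X(XᵀX)⁻¹Xᵀ the hat matrix, and Θ a thresholding rule applied componentwise. If γ̂ ∈ ℝⁿ is a fixed point of γ = Θ(Hγ + (I−H)y; λ) and β̂ = (XᵀX)⁻¹Xᵀ(y − γ̂), and if ψ(t;λ) is defined by ψ(t;λ) = t − Θ(t;λ), then Xᵀψ(y − Xβ̂; λ) = 0, i.e., β̂ is an M-estimate associated with ψ. -/
/-!
Since `Xᵀ X` is invertible, the residual of `β̂` is `y - X β̂ = H γ̂ + (1 - H) y`, so the fixed-point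
equation says exactly `γ̂ = Θ(y - X β̂; λ)`. Hence `ψ(y - X β̂; λ) = y - X β̂ - γ̂ = (1 - H)(y - γ̂)`,
which `Xᵀ` annihilates because `Xᵀ H = Xᵀ`.
-/

open Matrix

namespace Matrix

variable {m n R : Type*} [Fintype m] [Fintype n] [DecidableEq m] [DecidableEq n]

theorem isUnit_of_rank_eq_card [Field R] {A : Matrix n n R} (h : A.rank = Fintype.card n) :
    IsUnit A := by
  rw [← mulVec_surjective_iff_isUnit, ← coe_mulVecLin, ← LinearMap.range_eq_top]
  exact Submodule.eq_top_of_finrank_eq (by simpa [rank] using h)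

variable [CommRing R]

noncomputable def hatMatrix (X : Matrix m n R) : Matrix m m R :=
  X * (Xᵀ * X)⁻¹ * Xᵀ

theorem transpose_mul_one_sub_hatMatrix {X : Matrix m n R} (h : IsUnit (Xᵀ * X)) :
    Xᵀ * (1 - hatMatrix X) = 0 := by
  rw [hatMatrix, Matrix.mul_sub, Matrix.mul_one, ← Matrix.mul_assoc, ← Matrix.mul_assoc,
    mul_nonsing_inv _ ((isUnit_iff_isUnit_det _).mp h), Matrix.one_mul, sub_self]

theorem sub_mulVec_eq_hatMatrix_mulVec_add (X : Matrix m n R) (y γ : m → R) :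
    y - X *ᵥ ((Xᵀ * X)⁻¹ *ᵥ (Xᵀ *ᵥ (y - γ))) = hatMatrix X *ᵥ γ + (1 - hatMatrix X) *ᵥ y := by
  rw [mulVec_mulVec, mulVec_mulVec, ← hatMatrix, sub_mulVec, one_mulVec, mulVec_sub]
  abel

theorem hatMatrix_mulVec_add_sub (X : Matrix m n R) (y γ : m → R) :
    hatMatrix X *ᵥ γ + (1 - hatMatrix X) *ᵥ y - γ = (1 - hatMatrix X) *ᵥ (y - γ) := by
  rw [sub_mulVec, sub_mulVec, one_mulVec, one_mulVec, mulVec_sub]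
  abel

end Matrix

theorem IPOD_fixed_point_is_M_estimate
    (n p : ℕ) (X : Matrix (Fin n) (Fin p) ℝ) (hrank : X.rank = p)
    (y : Fin n → ℝ) (Θ : ℝ → ℝ → ℝ) (lam : Fin n → ℝ)
    (H : Matrix (Fin n) (Fin n) ℝ) (hH : H = X * (Xᵀ * X)⁻¹ * Xᵀ)
    (γhat : Fin n → ℝ)
    (hfix : ∀ i, γhat i = Θ ((H.mulVec γhat + (1 - H).mulVec y) i) (lam i))
    (βhat : Fin p → ℝ) (hβ : βhat = (Xᵀ * X)⁻¹.mulVec (Xᵀ.mulVec (y - γhat)))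
    (ψ : ℝ → ℝ → ℝ) (hψ : ∀ t l, ψ t l = t - Θ t l) :
    Xᵀ.mulVec (fun i => ψ ((y - X.mulVec βhat) i) (lam i)) = 0 := by
  obtain rfl : H = hatMatrix X := hH
  have hgram : IsUnit (Xᵀ * X) :=
    isUnit_of_rank_eq_card (by rw [rank_transpose_mul_self, hrank, Fintype.card_fin])
  have hres : y - X *ᵥ βhat = hatMatrix X *ᵥ γhat + (1 - hatMatrix X) *ᵥ y := by
    rw [hβ, sub_mulVec_eq_hatMatrix_mulVec_add]
  have hpsi : (fun i => ψ ((y - X *ᵥ βhat) i) (lam i)) = y - X *ᵥ βhat - γhat := by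
    funext i
    rw [hψ, Pi.sub_apply (y - X *ᵥ βhat), hfix i, ← hres]
  rw [hpsi, hres, hatMatrix_mulVec_add_sub, mulVec_mulVec,
    transpose_mul_one_sub_hatMatrix hgram, zero_mulVec]
end

section
/- Let Θ be a thresholding rule continuous at a point t > 0, let P_Θ(θ;λ) = ∫₀^{|θ|}(Θ⁻¹(u;λ)−u)du be its constructed penalty, and let P(θ;λ) = P(0;λ) + P_Θ(θ;λ) + q(θ;λ) where q ≥ 0 and q(Θ(s;λ);λ) = 0 for all s. Then θ̂ = Θ(t;λ) is the unique global minimizer of f(θ) = (t−θ)²/2 + P(θ;λ) over θ ∈ ℝ. -/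
/-!
Write `Θ⁻¹` for the generalized inverse `u ↦ sup {s | Θ s ≤ u}`. For `x ≥ 0` the objective is,
up to the constant `P 0` and the term `q ≥ 0` (which vanishes at `Θ t`),
`F x = (t - x)² / 2 + ∫₀ˣ (Θ⁻¹ u - u) du`, and `F x - F (Θ t) = ∫_{Θ t}^x (Θ⁻¹ u - t) du`.
Continuity of `Θ` at `t` makes `Θ⁻¹ u` cross the level `t` strictly at `u = Θ t`, so this
integral is positive for every `x ≠ Θ t`. A negative `θ` does strictly worse than `|θ|`, since
`t > 0`.
-/

open Set Filter Topology MeasureTheory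

section GeneralizedInverse

variable {Θ : ℝ → ℝ}

theorem Monotone.bddAbove_setOf_le (hmono : Monotone Θ) (htend : Tendsto Θ atTop atTop) (u : ℝ) :
    BddAbove {s | Θ s ≤ u} := by
  obtain ⟨s, hs⟩ := (htend.eventually_gt_atTop u).exists
  exact ⟨s, fun x hx => le_of_not_gt fun hsx => (hs.trans_le (hmono hsx.le)).not_ge hx⟩

theorem Monotone.monotoneOn_sSup_setOf_le (hmono : Monotone Θ) (htend : Tendsto Θ atTop atTop)
    (a : ℝ) : MonotoneOn (fun u => sSup {s | Θ s ≤ u}) (Ici (Θ a)) := fun _ hu v _ huv =>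
  csSup_le_csSup (hmono.bddAbove_setOf_le htend v) ⟨a, hu⟩ fun _ hs => le_trans hs huv

theorem Monotone.lt_sSup_setOf_le (hmono : Monotone Θ) (htend : Tendsto Θ atTop atTop) {t u : ℝ}
    (hcont : ContinuousAt Θ t) (hu : Θ t < u) : t < sSup {s | Θ s ≤ u} := by
  obtain ⟨s, hΘs, hts⟩ := (((hcont.eventually (eventually_lt_nhds hu)).filter_mono
    nhdsWithin_le_nhds).and (self_mem_nhdsWithin (s := Ioi t))).exists
  exact hts.trans_le (le_csSup (hmono.bddAbove_setOf_le htend u) hΘs.le)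

theorem Monotone.sSup_setOf_le_lt (hmono : Monotone Θ) {t u : ℝ} (hcont : ContinuousAt Θ t)
    (hne : {s | Θ s ≤ u}.Nonempty) (hu : u < Θ t) : sSup {s | Θ s ≤ u} < t := by
  obtain ⟨s, hΘs, hst⟩ := (((hcont.eventually (eventually_gt_nhds hu)).filter_mono
    nhdsWithin_le_nhds).and (self_mem_nhdsWithin (s := Iio t))).exists
  refine (csSup_le hne fun x hx => ?_).trans_lt hst
  exact le_of_not_gt fun hsx => (hΘs.trans_le (hmono hsx.le)).not_ge hx

end GeneralizedInverse

section PenalizedLoss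

/-- The objective `(t - x)² / 2 + P_Θ(x)` for `x ≥ 0`, with `g` in the role of `Θ⁻¹`. -/
noncomputable def penalizedLoss (g : ℝ → ℝ) (t x : ℝ) : ℝ :=
  (t - x) ^ 2 / 2 + ∫ u in (0 : ℝ)..x, (g u - u)

variable {g : ℝ → ℝ} {t a x : ℝ}

theorem penalizedLoss_sub_penalizedLoss (h0a : IntervalIntegrable g volume 0 a)
    (hax : IntervalIntegrable g volume a x) :
    penalizedLoss g t x - penalizedLoss g t a = ∫ u in a..x, (g u - t) := by
  have hid : ∀ b c : ℝ, IntervalIntegrable (fun u : ℝ => u) volume b c :=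
    fun _ _ => continuous_id.intervalIntegrable _ _
  have hsplit :=
    intervalIntegral.integral_add_adjacent_intervals (h0a.sub (hid 0 a)) (hax.sub (hid a x))
  rw [intervalIntegral.integral_sub hax (hid a x)] at hsplit
  rw [penalizedLoss, penalizedLoss, ← hsplit,
    intervalIntegral.integral_sub hax intervalIntegrable_const, integral_id,
    intervalIntegral.integral_const, smul_eq_mul]
  ring

theorem integral_sub_pos_of_crossing (hint : IntervalIntegrable g volume a x)
    (hbelow : ∀ u ∈ Ioo x a, g u < t) (habove : ∀ u ∈ Ioo a x, t < g u) (hxa : x ≠ a) :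
    0 < ∫ u in a..x, (g u - t) := by
  rcases hxa.lt_or_gt with hlt | hgt
  · rw [intervalIntegral.integral_symm, ← intervalIntegral.integral_neg]
    exact intervalIntegral.intervalIntegral_pos_of_pos_on
      (hint.symm.sub intervalIntegrable_const).neg
      (fun u hu => neg_pos.2 (sub_neg.2 (hbelow u hu))) hlt
  · exact intervalIntegral.intervalIntegral_pos_of_pos_on (hint.sub intervalIntegrable_const)
      (fun u hu => sub_pos.2 (habove u hu)) hgt

theorem penalizedLoss_lt_of_crossing (hg : MonotoneOn g (Ici 0)) (ha : 0 ≤ a) (hx : 0 ≤ x)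
    (hbelow : ∀ u, 0 ≤ u → u < a → g u < t) (habove : ∀ u, a < u → t < g u) (hxa : x ≠ a) :
    penalizedLoss g t a < penalizedLoss g t x := by
  have hint : ∀ b c : ℝ, 0 ≤ b → 0 ≤ c → IntervalIntegrable g volume b c :=
    fun _ _ hb hc => (hg.mono (ordConnected_Ici.uIcc_subset hb hc)).intervalIntegrable
  have hpos := integral_sub_pos_of_crossing (hint a x ha hx)
    (fun u hu => hbelow u (hx.trans hu.1.le) hu.2) (fun u hu => habove u hu.1) hxa
  linarith [penalizedLoss_sub_penalizedLoss (t := t) (hint 0 a le_rfl ha) (hint a x ha hx)]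

end PenalizedLoss

theorem theta_unique_minimizer_general_general (Θ : ℝ → ℝ)
    (hmono : ∀ t t' : ℝ, t ≤ t' → Θ t ≤ Θ t')
    (htend : Filter.Tendsto Θ Filter.atTop Filter.atTop)
    (hshrink : ∀ t : ℝ, 0 ≤ t → 0 ≤ Θ t ∧ Θ t ≤ t)
    (t : ℝ) (ht : 0 < t) (hcont : ContinuousAt Θ t)
    (Θinv : ℝ → ℝ) (hΘinv : ∀ u : ℝ, 0 ≤ u → Θinv u = sSup {s : ℝ | Θ s ≤ u})
    (PΘ : ℝ → ℝ) (hPΘ : ∀ θ : ℝ, PΘ θ = ∫ u in (0 : ℝ)..(|θ|), (Θinv u - u))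
    (q P : ℝ → ℝ)
    (hq : ∀ θ : ℝ, 0 ≤ q θ) (hqΘ : ∀ s : ℝ, q (Θ s) = 0)
    (hP : ∀ θ : ℝ, P θ = P 0 + PΘ θ + q θ) :
    ∀ θ : ℝ, θ ≠ Θ t →
      (t - Θ t) ^ 2 / 2 + P (Θ t) < (t - θ) ^ 2 / 2 + P θ := by
  intro θ hθ
  have hmono : Monotone Θ := fun _ _ h => hmono _ _ h
  have hΘ0 : Θ 0 = 0 := le_antisymm (hshrink 0 le_rfl).2 (hshrink 0 le_rfl).1
  have hΘt : 0 ≤ Θ t := (hshrink t ht.le).1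
  have hinv_mono : MonotoneOn Θinv (Ici 0) := fun u hu v hv huv => by
    rw [hΘinv u hu, hΘinv v hv]
    exact hmono.monotoneOn_sSup_setOf_le htend 0 (by rwa [hΘ0]) (by rwa [hΘ0]) huv
  have hmin : ∀ x, 0 ≤ x → x ≠ Θ t → penalizedLoss Θinv t (Θ t) < penalizedLoss Θinv t x :=
    fun x hx => penalizedLoss_lt_of_crossing hinv_mono hΘt hx
      (fun u hu hut => hΘinv u hu ▸ hmono.sSup_setOf_le_lt hcont ⟨0, by simpa [hΘ0]⟩ hut)
      (fun u hut => hΘinv u (hΘt.trans hut.le) ▸ hmono.lt_sSup_setOf_le htend hcont hut)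
  have hF : ∀ x, 0 ≤ x → penalizedLoss Θinv t x = (t - x) ^ 2 / 2 + PΘ x := fun x hx => by
    rw [penalizedLoss, hPΘ, abs_of_nonneg hx]
  suffices hgap : (t - Θ t) ^ 2 / 2 + PΘ (Θ t) < (t - θ) ^ 2 / 2 + PΘ θ by
    rw [hP θ, hP (Θ t), hqΘ]
    linarith [hq θ]
  rcases le_or_gt 0 θ with hθ0 | hθ0
  · simpa only [hF _ hΘt, hF _ hθ0] using hmin θ hθ0 hθ
  · have hle : penalizedLoss Θinv t (Θ t) ≤ penalizedLoss Θinv t |θ| := by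
      rcases eq_or_ne |θ| (Θ t) with h | h
      · rw [h]
      · exact (hmin |θ| (abs_nonneg θ) h).le
    have hPΘ_abs : PΘ |θ| = PΘ θ := by rw [hPΘ, hPΘ, abs_abs]
    rw [hF _ hΘt, hF _ (abs_nonneg θ), hPΘ_abs, abs_of_neg hθ0] at hle
    nlinarith [mul_pos ht (neg_pos.2 hθ0)]

theorem theta_unique_minimizer_general (lam : ℝ) (Θ : ℝ → ℝ)
    (hodd : ∀ t : ℝ, Θ (-t) = -Θ t)
    (hmono : ∀ t t' : ℝ, t ≤ t' → Θ t ≤ Θ t')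
    (htend : Filter.Tendsto Θ Filter.atTop Filter.atTop)
    (hshrink : ∀ t : ℝ, 0 ≤ t → 0 ≤ Θ t ∧ Θ t ≤ t)
    (t : ℝ) (ht : 0 < t) (hcont : ContinuousAt Θ t)
    (Θinv : ℝ → ℝ) (hΘinv : ∀ u : ℝ, 0 ≤ u → Θinv u = sSup {s : ℝ | Θ s ≤ u})
    (PΘ : ℝ → ℝ) (hPΘ : ∀ θ : ℝ, PΘ θ = ∫ u in (0 : ℝ)..(|θ|), (Θinv u - u))
    (q P : ℝ → ℝ)
    (hq : ∀ θ : ℝ, 0 ≤ q θ) (hqΘ : ∀ s : ℝ, q (Θ s) = 0)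
    (hP : ∀ θ : ℝ, P θ = P 0 + PΘ θ + q θ) :
    ∀ θ : ℝ, θ ≠ Θ t →
      (t - Θ t) ^ 2 / 2 + P (Θ t) < (t - θ) ^ 2 / 2 + P θ :=
  theta_unique_minimizer_general_general Θ hmono htend hshrink t ht hcont Θinv hΘinv PΘ hPΘ q P hq
    hqΘ hP
end

section
/- For hard thresholding with λ > 0, define q(x;λ) = (λ−|x|)²/2 for 0 < |x| < λ and q(x;λ) = 0 for x = 0 or |x| ≥ λ. Then the L0 penalty P(x;λ) = (λ²/2)·1_{x≠0} satisfies P(x;λ) = P_hard(x;λ) + q(x;λ), where P_hard(x;λ) = (λ|x|−x²/2)·1_{|x|<λ} + (λ²/2)·1_{|x|≥λ}, and q is nonnegative with q(Θ_hard(t;λ);λ) = 0 for all t. -/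
/-- Hard-thresholding function. -/
noncomputable def hardThresh (t lam : ℝ) : ℝ := if |t| ≤ lam then 0 else t

/-! On `|x| < λ` the hard-thresholding penalty is `λ|x| - x²/2`, and completing the square
`λ|x| - x²/2 + (λ - |x|)²/2 = λ²/2` shows that it differs from the L0 penalty `λ²/2 · 1_{x ≠ 0}` by
the nonnegative gap `(λ - |x|)²/2`. Hard thresholding never outputs a point with `0 < |x| ≤ λ`,
which is exactly where the gap is positive. -/

noncomputable section

def l0Penalty (lam x : ℝ) : ℝ := if x ≠ 0 then lam ^ 2 / 2 else 0

def hardPenalty (lam x : ℝ) : ℝ := if |x| < lam then lam * |x| - x ^ 2 / 2 else lam ^ 2 / 2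

def hardPenaltyGap (lam x : ℝ) : ℝ :=
  if 0 < |x| ∧ |x| < lam then (lam - |x|) ^ 2 / 2 else 0

end

theorem mul_abs_sub_sq_div_two_add_sq_div_two (lam x : ℝ) :
    lam * |x| - x ^ 2 / 2 + (lam - |x|) ^ 2 / 2 = lam ^ 2 / 2 := by
  rw [← sq_abs x]
  ring

theorem l0Penalty_eq_hardPenalty_add_hardPenaltyGap {lam : ℝ} (hlam : 0 < lam) (x : ℝ) :
    l0Penalty lam x = hardPenalty lam x + hardPenaltyGap lam x := by
  rcases eq_or_ne x 0 with rfl | hx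
  · simp [l0Penalty, hardPenalty, hardPenaltyGap, hlam]
  · have hx' : 0 < |x| := abs_pos.mpr hx
    by_cases hlt : |x| < lam
    · simp only [l0Penalty, hardPenalty, hardPenaltyGap, if_pos hx, if_pos hlt,
        if_pos (And.intro hx' hlt)]
      exact (mul_abs_sub_sq_div_two_add_sq_div_two lam x).symm
    · simp [l0Penalty, hardPenalty, hardPenaltyGap, hx, hlt]

theorem hardPenaltyGap_nonneg (lam x : ℝ) : 0 ≤ hardPenaltyGap lam x := by
  unfold hardPenaltyGap
  split_ifs <;> positivity

theorem hardThresh_eq_zero_or_lt_abs (t lam : ℝ) :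
    hardThresh t lam = 0 ∨ lam < |hardThresh t lam| := by
  unfold hardThresh
  split_ifs with h
  · exact Or.inl rfl
  · exact Or.inr (not_le.mp h)

theorem hardPenaltyGap_hardThresh (t lam : ℝ) : hardPenaltyGap lam (hardThresh t lam) = 0 := by
  rcases hardThresh_eq_zero_or_lt_abs t lam with h | h
  · simp [hardPenaltyGap, h]
  · simp [hardPenaltyGap, not_lt.mpr h.le]

theorem L0_penalty_decomposition (lam : ℝ) (hlam : 0 < lam)
    (q : ℝ → ℝ)
    (hq : ∀ x : ℝ, q x = if 0 < |x| ∧ |x| < lam then (lam - |x|) ^ 2 / 2 else 0)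
    (Phard : ℝ → ℝ)
    (hPhard : ∀ x : ℝ, Phard x =
      if |x| < lam then lam * |x| - x ^ 2 / 2 else lam ^ 2 / 2)
    (P : ℝ → ℝ) (hP : ∀ x : ℝ, P x = if x ≠ 0 then lam ^ 2 / 2 else 0) :
    (∀ x : ℝ, P x = Phard x + q x) ∧ (∀ x : ℝ, 0 ≤ q x) ∧
      (∀ t : ℝ, q (hardThresh t lam) = 0) := by
  obtain rfl : q = hardPenaltyGap lam := funext hq
  obtain rfl : Phard = hardPenalty lam := funext hPhard
  obtain rfl : P = l0Penalty lam := funext hP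
  exact ⟨l0Penalty_eq_hardPenalty_add_hardPenaltyGap hlam, hardPenaltyGap_nonneg lam,
    fun t => hardPenaltyGap_hardThresh t lam⟩
end
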